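/- Let G = F₂ ≀ S₃ with F₂ the free group on x, y and S₃ = ⟨s₁, s₂ | s₁² = s₂² = (s₁s₂)³ = 1⟩, and let S = {x, y, s₁, s₂, c} with c = s₁s₂ be the generating set of G where x, y generate the copy of F₂ at the coordinate indexed by the identity of S₃. Then pw(G, S) ≤ 20, i.e. every element of G is a product of at most 20 palindromes with respect to S. -/

import Mathlib

section PalindromicWidth

/-- `g` is a palindrome with respect to the (symmetric) generating set `X`:
some word over `X` representing `g` equals its own reverse. -/
def IsPalindrome {G : Type*} [Group G] (X : Set G) (g : G) : Prop :=
  ∃ w : List G, (∀ a ∈ w, a ∈ X) ∧ w.reverse = w ∧ w.prod = g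

/-- The palindromic length of `g` with respect to `X`, valued in `ℕ∞`:
the least `k` such that `g` is a product of `k` palindromes. -/
noncomputable def palLength {G : Type*} [Group G] (X : Set G) (g : G) : ℕ∞ :=
  sInf {k : ℕ∞ | ∃ L : List G, (L.length : ℕ∞) = k ∧ (∀ p ∈ L, IsPalindrome X p) ∧ L.prod = g}

/-- The palindromic width `pw(G, X) = sup_{g ∈ G} l_P(g)`, valued in `ℕ∞`. -/
noncomputable def palWidth (G : Type*) [Group G] (X : Set G) : ℕ∞ :=
  ⨆ g : G, palLength X g

end PalindromicWidth

/-- The permutation action of `K` on the base group `K → H` of the wreath product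
`H ≀ K`, by left translation on the index set: `(k • f) k' = f (k⁻¹ * k')`. -/
def wreathAction (H K : Type*) [Group H] [Group K] : K →* MulAut (K → H) where
  toFun k :=
    { toFun := fun f x => f (k⁻¹ * x)
      invFun := fun f x => f (k * x)
      left_inv := fun f => by funext x; simp [← mul_assoc]
      right_inv := fun f => by funext x; simp [← mul_assoc]
      map_mul' := fun f g => rfl }
  map_one' := by
    ext f x
    simp
  map_mul' := fun a b => by
    ext f x
    simp [mul_assoc]

/-- The wreath product `H ≀ K = (∏_{k ∈ K} H) ⋊ K`. -/
abbrev WreathProduct (H K : Type*) [Group H] [Group K] :=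
  SemidirectProduct (K → H) K (wreathAction H K)

/-- The symmetric group `S₃`, realized as the permutations of `Fin 3`. -/
abbrev S3 := Equiv.Perm (Fin 3)

/-- The wreath product `G = F₂ ≀ S₃`. -/
abbrev F2wrS3 := WreathProduct (FreeGroup (Fin 2)) S3

/-- The generator `x` of the copy of `F₂` at the coordinate indexed by `1 ∈ S₃`. -/
def genX : F2wrS3 := SemidirectProduct.inl (Pi.mulSingle (1 : S3) (FreeGroup.of 0))

/-- The generator `y` of the copy of `F₂` at the coordinate indexed by `1 ∈ S₃`. -/
def genY : F2wrS3 := SemidirectProduct.inl (Pi.mulSingle (1 : S3) (FreeGroup.of 1))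

/-- The generator `s₁` (a standard involution of `S₃`). -/
def genS1 : F2wrS3 := SemidirectProduct.inr (Equiv.swap 0 1)

/-- The generator `s₂` (a standard involution of `S₃`). -/
def genS2 : F2wrS3 := SemidirectProduct.inr (Equiv.swap 1 2)

/-- The generator `c = s₁ s₂`. -/
def genC : F2wrS3 := SemidirectProduct.inr (Equiv.swap 0 1 * Equiv.swap 1 2)

/-- The generating set `S = {x, y, s₁, s₂, c}` of `F₂ ≀ S₃`, together with inverses. -/
def genSet : Set F2wrS3 :=
  {genX, genY, genS1, genS2, genC} ∪ {genX, genY, genS1, genS2, genC}⁻¹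

/-!
For a word `v` over `S` with `v.prod = 1`, the palindrome `v ++ v.reverse` represents
`v.reverse.prod`; these reversed products form a subgroup `𝒦`, normalised by the group generated
by `S`. The word `c⁻¹ s₁ s₂` puts `c` into `𝒦`, hence also the commutators `[h, c]` for `h` in the
base group (which move a coordinate value along a `⟨c⟩`-coset) and the commutator subgroup of each
coordinate copy of `F₂`. Modulo `𝒦`, a base element therefore reduces to `x^a y^b` at coordinate
`1` and `x^a' y^b'` at coordinate `s₁`, so every `(f, σ)` is a product of seven palindromes:
`x^a`, `y^b`, `s₁ x^a' s₁`, `s₁ y^b' s₁`, two elements of `𝒦`, and `σ`.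
-/

section Palindromes

variable {G : Type*} [Group G] {X : Set G}

def IsProdOfPalindromes (X : Set G) (n : ℕ) (g : G) : Prop :=
  ∃ L : List G, L.length ≤ n ∧ (∀ p ∈ L, IsPalindrome X p) ∧ L.prod = g

theorem IsPalindrome.isProdOfPalindromes {p : G} (hp : IsPalindrome X p) :
    IsProdOfPalindromes X 1 p :=
  ⟨[p], by simp, by simpa using hp, by simp⟩

theorem IsProdOfPalindromes.mul {m n : ℕ} {g h : G} (hg : IsProdOfPalindromes X m g)
    (hh : IsProdOfPalindromes X n h) : IsProdOfPalindromes X (m + n) (g * h) := by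
  obtain ⟨L, hL, hLp, rfl⟩ := hg
  obtain ⟨M, hM, hMp, rfl⟩ := hh
  exact ⟨L ++ M, by simp; omega, List.forall_mem_append.2 ⟨hLp, hMp⟩, List.prod_append⟩

theorem IsProdOfPalindromes.mono {m n : ℕ} {g : G} (hg : IsProdOfPalindromes X m g)
    (hmn : m ≤ n) : IsProdOfPalindromes X n g := by
  obtain ⟨L, hL, hLp, hLg⟩ := hg
  exact ⟨L, hL.trans hmn, hLp, hLg⟩

theorem palWidth_le_of_forall_isProdOfPalindromes {n : ℕ}
    (h : ∀ g : G, IsProdOfPalindromes X n g) : palWidth G X ≤ n :=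
  iSup_le fun g => by
    obtain ⟨L, hL, hLp, hLg⟩ := h g
    exact (sInf_le ⟨L, rfl, hLp, hLg⟩ : palLength X g ≤ L.length).trans (by exact_mod_cast hL)

theorem isPalindrome_one : IsPalindrome X 1 := ⟨[], by simp, rfl, rfl⟩

theorem isPalindrome_of_mem {a : G} (ha : a ∈ X) : IsPalindrome X a :=
  ⟨[a], by simpa using ha, rfl, by simp⟩

theorem IsPalindrome.mul_mul_self {a p : G} (ha : IsPalindrome X a) (hp : IsPalindrome X p) :
    IsPalindrome X (a * p * a) := by
  obtain ⟨v, hvX, hv, rfl⟩ := ha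
  obtain ⟨w, hwX, hw, rfl⟩ := hp
  exact ⟨v ++ w ++ v, List.forall_mem_append.2 ⟨List.forall_mem_append.2 ⟨hvX, hwX⟩, hvX⟩,
    by simp [hv, hw], by simp [mul_assoc]⟩

theorem isPalindrome_pow {a : G} (ha : a ∈ X) (n : ℕ) : IsPalindrome X (a ^ n) :=
  ⟨List.replicate n a, fun b hb => (List.eq_of_mem_replicate hb) ▸ ha, by simp, by simp⟩

theorem isPalindrome_zpow {a : G} (ha : a ∈ X) (ha' : a⁻¹ ∈ X) (n : ℤ) :
    IsPalindrome X (a ^ n) := by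
  obtain ⟨n, rfl | rfl⟩ := Int.eq_nat_or_neg n
  · simpa using isPalindrome_pow ha n
  · simpa using isPalindrome_pow ha' n

theorem IsPalindrome.mem_closure {g : G} (hg : IsPalindrome X g) : g ∈ Subgroup.closure X := by
  obtain ⟨w, hw, -, rfl⟩ := hg
  exact Subgroup.list_prod_mem _ fun a ha => Subgroup.subset_closure (hw a ha)

def reversalKernel (X : Set G) (hX : X⁻¹ = X) : Subgroup G where
  carrier := {n | ∃ v : List G, (∀ a ∈ v, a ∈ X) ∧ v.prod = 1 ∧ v.reverse.prod = n}
  one_mem' := ⟨[], by simp, rfl, rfl⟩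
  mul_mem' := by
    rintro _ _ ⟨v, hvX, hv, rfl⟩ ⟨w, hwX, hw, rfl⟩
    exact ⟨w ++ v, List.forall_mem_append.2 ⟨hwX, hvX⟩, by simp [hv, hw], by simp⟩
  inv_mem' := by
    rintro _ ⟨v, hvX, hv, rfl⟩
    refine ⟨(v.map (·⁻¹)).reverse, ?_, ?_, ?_⟩
    · simp only [List.mem_reverse, List.mem_map]
      rintro _ ⟨a, ha, rfl⟩
      rw [← hX, Set.inv_mem_inv]
      exact hvX a ha
    · rw [← List.prod_inv_reverse, hv, inv_one]
    · simpa using (List.prod_inv_reverse v.reverse).symm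

variable {hX : X⁻¹ = X}

theorem IsPalindrome.of_mem_reversalKernel {n : G} (hn : n ∈ reversalKernel X hX) :
    IsPalindrome X n := by
  obtain ⟨v, hvX, hv, rfl⟩ := hn
  exact ⟨v ++ v.reverse, List.forall_mem_append.2 ⟨hvX, by simpa using hvX⟩, by simp,
    by simp [hv]⟩

theorem closure_le_normalizer_reversalKernel :
    Subgroup.closure X ≤ Subgroup.normalizer (reversalKernel X hX : Set G) := by
  have conj_mem : ∀ a ∈ X, ∀ n ∈ reversalKernel X hX, a * n * a⁻¹ ∈ reversalKernel X hX := by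
    rintro a ha _ ⟨v, hvX, hv, rfl⟩
    have ha' : a⁻¹ ∈ X := by rwa [← Set.mem_inv, hX]
    exact ⟨a⁻¹ :: v ++ [a], List.forall_mem_append.2 ⟨List.forall_mem_cons.2 ⟨ha', hvX⟩,
      by simpa using ha⟩, by simp [hv], by simp [mul_assoc]⟩
  refine (Subgroup.closure_le _).2 fun a ha => Subgroup.mem_normalizer_iff.2 fun n => ?_
  have ha' : a⁻¹ ∈ X := by rwa [← Set.mem_inv, hX]
  refine ⟨conj_mem a ha n, fun h => ?_⟩
  simpa [mul_assoc] using conj_mem a⁻¹ ha' _ h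

theorem conj_mem_reversalKernel {h n : G} (hh : h ∈ Subgroup.closure X)
    (hn : n ∈ reversalKernel X hX) : h * n * h⁻¹ ∈ reversalKernel X hX :=
  (Subgroup.mem_normalizer_iff.1 (closure_le_normalizer_reversalKernel hh) n).1 hn

end Palindromes

open scoped commutatorElement

theorem exists_zpow_mul_zpow_mul_mem_commutator {F : Type*} [Group F] {x y : F}
    (hxy : Subgroup.closure {x, y} = ⊤) (u : F) :
    ∃ a b : ℤ, ∃ d ∈ commutator F, u = x ^ a * y ^ b * d := by
  have hu : Abelianization.of u ∈
      Subgroup.zpowers (Abelianization.of x) ⊔ Subgroup.zpowers (Abelianization.of y) := by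
    rw [Subgroup.zpowers_eq_closure, Subgroup.zpowers_eq_closure, ← Subgroup.closure_union,
      Set.singleton_union, ← Set.image_pair, ← MonoidHom.map_closure, hxy]
    exact ⟨u, trivial, rfl⟩
  obtain ⟨_, ⟨a, rfl⟩, _, ⟨b, rfl⟩, hab⟩ := Subgroup.mem_sup.1 hu
  refine ⟨a, b, (x ^ a * y ^ b)⁻¹ * u, ?_, by group⟩
  rw [← Abelianization.ker_of, MonoidHom.mem_ker]
  simp [← hab]

theorem Pi.mulSingle_mul_mulSingle_mul_mulSingle {ι H : Type*} [DecidableEq ι] [Group H]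
    {i j l : ι} (hij : i ≠ j) (hil : i ≠ l) (hjl : j ≠ l) (u v w : H) :
    (Pi.mulSingle i u * Pi.mulSingle j v * Pi.mulSingle l w : ι → H) =
      Pi.mulSingle i (u * v * w) * (Pi.mulSingle i (v * w)⁻¹ * Pi.mulSingle j (v * w)) *
        (Pi.mulSingle j w⁻¹ * Pi.mulSingle l w) := by
  funext m
  by_cases hi : m = i
  · subst hi; simp [hij, hil]
  by_cases hj : m = j
  · subst hj; simp [hij.symm, hjl]
  by_cases hl : m = l
  · subst hl; simp [hil.symm, hjl.symm]
  · simp [hi, hj, hl]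

theorem Pi.commutatorElement_mulSingle_mul_mulSingle {ι H : Type*} [DecidableEq ι] [Group H]
    {i j : ι} (hij : i ≠ j) (z t s : H) :
    ⁅(Pi.mulSingle i z : ι → H), Pi.mulSingle i t * Pi.mulSingle j s⁆ =
      (Pi.mulSingle i ⁅z, t⁆ : ι → H) := by
  funext m
  by_cases hi : m = i
  · subst hi; simp [hij, commutatorElement_def]
  by_cases hj : m = j
  · subst hj; simp [hij.symm, commutatorElement_def]
  · simp [hi, hj, commutatorElement_def]

section WreathProduct

open SemidirectProduct

variable {H K : Type*} [Group H] [Group K] [DecidableEq K]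

theorem wreathAction_mulSingle (τ k : K) (u : H) :
    wreathAction H K τ (Pi.mulSingle k u) = Pi.mulSingle (τ * k) u := by
  funext m
  change (Pi.mulSingle k u : K → H) (τ⁻¹ * m) = (Pi.mulSingle (τ * k) u : K → H) m
  simp only [Pi.mulSingle_apply, inv_mul_eq_iff_eq_mul]

theorem WreathProduct.inr_mul_inl_mulSingle_mul_inr_inv (τ k : K) (u : H) :
    (inr τ * inl (Pi.mulSingle k u) * inr τ⁻¹ : WreathProduct H K) =
      inl (Pi.mulSingle (τ * k) u) := by
  rw [← inl_aut, wreathAction_mulSingle]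

end WreathProduct

namespace F2wrS3

open SemidirectProduct

def σ₁ : S3 := Equiv.swap 0 1
def σ₂ : S3 := Equiv.swap 1 2
def γ : S3 := σ₁ * σ₂

theorem perm_cases (k : S3) :
    k = 1 ∨ k = σ₁ ∨ k = σ₂ ∨ k = γ ∨ k = γ⁻¹ ∨ k = σ₁ * σ₂ * σ₁ := by
  revert k; decide

theorem γ_orbit_ne (k : S3) : k ≠ γ * k ∧ k ≠ γ * (γ * k) ∧ γ * k ≠ γ * (γ * k) := by
  revert k; decide

def coordEmb (k : S3) : FreeGroup (Fin 2) →* F2wrS3 :=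
  inl.comp (MonoidHom.mulSingle (fun _ : S3 => FreeGroup (Fin 2)) k)

theorem genSet_inv : genSet⁻¹ = genSet := by
  rw [genSet, Set.union_inv, inv_inv, Set.union_comm]

local notation "𝒦" => reversalKernel genSet genSet_inv

theorem inv_mem_genSet {a : F2wrS3} (ha : a ∈ genSet) : a⁻¹ ∈ genSet := by
  rw [← genSet_inv]
  exact Set.inv_mem_inv.2 ha

theorem coordEmb_one_of_mem_genSet (i : Fin 2) : coordEmb 1 (FreeGroup.of i) ∈ genSet := by
  fin_cases i
  exacts [Or.inl (by simp [genX, coordEmb]), Or.inl (by simp [genY, coordEmb])]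

theorem isPalindrome_inr (σ : S3) : IsPalindrome genSet (inr σ) := by
  have hS1 : genS1 ∈ genSet := Or.inl (by simp)
  rcases perm_cases σ with rfl | rfl | rfl | rfl | rfl | rfl
  · exact isPalindrome_one
  · exact isPalindrome_of_mem hS1
  · exact isPalindrome_of_mem (Or.inl (by simp) : genS2 ∈ genSet)
  · exact isPalindrome_of_mem (Or.inl (by simp) : genC ∈ genSet)
  · exact isPalindrome_of_mem (inv_mem_genSet (Or.inl (by simp) : genC ∈ genSet))
  · rw [map_mul, map_mul]
    exact (isPalindrome_of_mem hS1).mul_mul_self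
      (isPalindrome_of_mem (Or.inl (by simp) : genS2 ∈ genSet))

theorem coordEmb_eq_conj (k : S3) (u : FreeGroup (Fin 2)) :
    coordEmb k u = inr k * coordEmb 1 u * inr k⁻¹ := by
  simp only [coordEmb, MonoidHom.comp_apply, MonoidHom.mulSingle_apply,
    WreathProduct.inr_mul_inl_mulSingle_mul_inr_inv, mul_one]

theorem isPalindrome_coordEmb_zpow {k : S3} (hk : k⁻¹ = k) (i : Fin 2) (a : ℤ) :
    IsPalindrome genSet (coordEmb k (FreeGroup.of i ^ a)) := by
  have hi := coordEmb_one_of_mem_genSet i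
  rw [coordEmb_eq_conj, hk, map_zpow]
  exact (isPalindrome_inr k).mul_mul_self
    (isPalindrome_zpow hi (inv_mem_genSet hi) a)

theorem coordEmb_mem_closure (k : S3) (u : FreeGroup (Fin 2)) :
    coordEmb k u ∈ Subgroup.closure genSet := by
  have hF : (⊤ : Subgroup (FreeGroup (Fin 2))) ≤ (Subgroup.closure genSet).comap (coordEmb 1) := by
    rw [← FreeGroup.closure_range_of, Subgroup.closure_le]
    rintro _ ⟨i, rfl⟩
    exact Subgroup.subset_closure (coordEmb_one_of_mem_genSet i)
  rw [coordEmb_eq_conj]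
  exact Subgroup.mul_mem _ (Subgroup.mul_mem _ (isPalindrome_inr k).mem_closure (hF trivial))
    (Subgroup.inv_mem _ (isPalindrome_inr k).mem_closure)

theorem genC_eq : genC = inr γ := rfl

theorem genC_mem : genC ∈ 𝒦 := by
  refine ⟨[genC⁻¹, genS1, genS2], ?_, ?_, ?_⟩
  · simp [genSet]
  · simp only [List.prod_cons, List.prod_nil, mul_one, genC, genS1, genS2, ← map_inv, ← map_mul]
    convert map_one (inr : S3 →* F2wrS3) using 2
    decide
  · simp only [List.reverse_cons, List.reverse_nil, List.nil_append, List.cons_append,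
      List.prod_cons, List.prod_nil, mul_one, genC, genS1, genS2, ← map_inv, ← map_mul]
    congr 1
    decide

/-- The commutator of `coordEmb k t` with `c` lies in `𝒦` because `c` does. -/
theorem inl_mulSingle_mul_mulSingle_γ_mem (k : S3) (t : FreeGroup (Fin 2)) :
    inl (Pi.mulSingle k t * Pi.mulSingle (γ * k) t⁻¹) ∈ 𝒦 := by
  have hconj : genC * (coordEmb k t)⁻¹ * genC⁻¹ = inl (Pi.mulSingle (γ * k) t⁻¹) := by
    simp only [genC_eq, coordEmb, MonoidHom.comp_apply, MonoidHom.mulSingle_apply, ← map_inv,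
      ← Pi.mulSingle_inv, WreathProduct.inr_mul_inl_mulSingle_mul_inr_inv]
  have hmem : coordEmb k t * (genC * (coordEmb k t)⁻¹ * genC⁻¹) ∈ 𝒦 := by
    simpa only [mul_assoc] using Subgroup.mul_mem _
      (conj_mem_reversalKernel (coordEmb_mem_closure k t) genC_mem) (Subgroup.inv_mem _ genC_mem)
  rwa [hconj, coordEmb, MonoidHom.comp_apply, MonoidHom.mulSingle_apply, ← map_mul] at hmem

theorem coordEmb_mem_of_mem_commutator (k : S3) {d : FreeGroup (Fin 2)}
    (hd : d ∈ commutator (FreeGroup (Fin 2))) : coordEmb k d ∈ 𝒦 := by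
  have hcomm : commutator (FreeGroup (Fin 2)) ≤ Subgroup.comap (coordEmb 1) 𝒦 := by
    rw [commutator_def, Subgroup.commutator_le]
    intro z _ t _
    have hn := inl_mulSingle_mul_mulSingle_γ_mem 1 t
    -- the part of `hn` at coordinate `γ` commutes with `coordEmb 1 z`
    have hmem := Subgroup.mul_mem _ (conj_mem_reversalKernel (coordEmb_mem_closure 1 z) hn)
      (Subgroup.inv_mem _ hn)
    rwa [← commutatorElement_def, coordEmb, MonoidHom.comp_apply, MonoidHom.mulSingle_apply,
      ← map_commutatorElement,
      Pi.commutatorElement_mulSingle_mul_mulSingle (γ_orbit_ne 1).1] at hmem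
  rw [coordEmb_eq_conj]
  exact conj_mem_reversalKernel (isPalindrome_inr k).mem_closure (hcomm hd)

theorem closure_of_pair_eq_top :
    Subgroup.closure {FreeGroup.of 0, FreeGroup.of 1} = (⊤ : Subgroup (FreeGroup (Fin 2))) := by
  rw [← FreeGroup.closure_range_of]
  congr 1
  ext
  simp [Fin.exists_fin_two, eq_comm]

theorem isProdOfPalindromes_inl_mulSingle_coset {k : S3} (hk : k⁻¹ = k)
    (u v w : FreeGroup (Fin 2)) : IsProdOfPalindromes genSet 3
      (inl (Pi.mulSingle k u * Pi.mulSingle (γ * k) v * Pi.mulSingle (γ * (γ * k)) w)) := by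
  obtain ⟨hk₁, hk₂, hk₃⟩ := γ_orbit_ne k
  obtain ⟨a, b, d, hd, huvw⟩ := exists_zpow_mul_zpow_mul_mem_commutator closure_of_pair_eq_top
    (u * v * w)
  have hshift₁ : inl (Pi.mulSingle k (v * w)⁻¹ * Pi.mulSingle (γ * k) (v * w)) ∈ 𝒦 := by
    simpa using inl_mulSingle_mul_mulSingle_γ_mem k (v * w)⁻¹
  have hshift₂ : inl (Pi.mulSingle (γ * k) w⁻¹ * Pi.mulSingle (γ * (γ * k)) w) ∈ 𝒦 := by
    simpa using inl_mulSingle_mul_mulSingle_γ_mem (γ * k) w⁻¹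
  have hrest := Subgroup.mul_mem _ (coordEmb_mem_of_mem_commutator k hd)
    (Subgroup.mul_mem _ hshift₁ hshift₂)
  have hcoord : inl (Pi.mulSingle k (FreeGroup.of 0 ^ a * FreeGroup.of 1 ^ b * d)) =
      coordEmb k (FreeGroup.of 0 ^ a) * coordEmb k (FreeGroup.of 1 ^ b) * coordEmb k d := by
    simp only [← map_mul]
    rfl
  rw [Pi.mulSingle_mul_mulSingle_mul_mulSingle hk₁ hk₂ hk₃, huvw, map_mul, map_mul, hcoord]
  simp only [mul_assoc]
  exact (isPalindrome_coordEmb_zpow hk 0 a).isProdOfPalindromes.mul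
    ((isPalindrome_coordEmb_zpow hk 1 b).isProdOfPalindromes.mul
      (IsPalindrome.of_mem_reversalKernel hrest).isProdOfPalindromes)

theorem eq_prod_mulSingle_γ_cosets (f : S3 → FreeGroup (Fin 2)) :
    f = Pi.mulSingle 1 (f 1) * Pi.mulSingle (γ * 1) (f (γ * 1)) *
        Pi.mulSingle (γ * (γ * 1)) (f (γ * (γ * 1))) *
      (Pi.mulSingle σ₁ (f σ₁) * Pi.mulSingle (γ * σ₁) (f (γ * σ₁)) *
        Pi.mulSingle (γ * (γ * σ₁)) (f (γ * (γ * σ₁)))) := by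
  funext m
  rcases perm_cases m with rfl | rfl | rfl | rfl | rfl | rfl <;>
    simp +decide [Pi.mulSingle_apply] <;>
    congr 1 <;> decide

theorem isProdOfPalindromes_seven (g : F2wrS3) : IsProdOfPalindromes genSet 7 g := by
  rw [← inl_left_mul_inr_right g, eq_prod_mulSingle_γ_cosets g.left, map_mul]
  exact ((isProdOfPalindromes_inl_mulSingle_coset inv_one _ _ _).mul
    (isProdOfPalindromes_inl_mulSingle_coset (by decide) _ _ _)).mul
    (isPalindrome_inr _).isProdOfPalindromes

end F2wrS3

/-- `pw(F₂ ≀ S₃, S) ≤ 20`: every element of `F₂ ≀ S₃` is a product of at most `20`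
palindromes with respect to `S = {x, y, s₁, s₂, c}`. -/
theorem pw_F2_wr_S3_le_20 :
    palWidth F2wrS3 genSet ≤ 20 ∧
      ∀ g : F2wrS3, ∃ L : List F2wrS3, L.length ≤ 20 ∧
        (∀ p ∈ L, IsPalindrome genSet p) ∧ L.prod = g := by
  have h : ∀ g, IsProdOfPalindromes genSet 20 g := fun g =>
    (F2wrS3.isProdOfPalindromes_seven g).mono (by norm_num)
  exact ⟨palWidth_le_of_forall_isProdOfPalindromes h, h⟩
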